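/- arXiv:1207.0535 — 2 statements merged into one kernel-verified Lean document; each statement's English description precedes it below -/
import Mathlib

section
/- Let K and L be regular languages with state complexities m and n. Then the state complexity of Lᴿ \ K is at most m·2ⁿ − (m − 1). -/
namespace SCPaper

/-- Reversal of a language. -/
def rev {α : Type} (L : Language α) : Language α := {w | w.reverse ∈ L}

/-- Union of two languages. -/
def lunion {α : Type} (K L : Language α) : Language α := {w | w ∈ K ∨ w ∈ L}

/-- Intersection of two languages. -/
def linter {α : Type} (K L : Language α) : Language α := {w | w ∈ K ∧ w ∈ L}

/-- Difference of two languages. -/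
def ldiff {α : Type} (K L : Language α) : Language α := {w | w ∈ K ∧ w ∉ L}

/-- Symmetric difference of two languages. -/
def lsymm {α : Type} (K L : Language α) : Language α := lunion (ldiff K L) (ldiff L K)

/-- Sizes (numbers of states) of complete DFAs recognizing `L`. -/
def complexitySet {α : Type} (L : Language α) : Set ℕ :=
  {n | ∃ M : DFA α (Fin n), M.accepts = L}

/-- A language is regular if it is recognized by some finite DFA. -/
def Regular {α : Type} (L : Language α) : Prop := (complexitySet L).Nonempty

/-- State complexity: the number of states of a minimal DFA for `L`. -/
noncomputable def sc {α : Type} (L : Language α) : ℕ := sInf (complexitySet L)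

/-- The cyclic permutation (0,1,…,n−1). -/
def cyc (n : ℕ) (i : Fin n) : Fin n :=
  ⟨(i.val + 1) % n, Nat.mod_lt _ (Nat.lt_of_le_of_lt (Nat.zero_le _) i.isLt)⟩

/-- The transposition (0,1). -/
def tp01 (n : ℕ) (i : Fin n) : Fin n :=
  if i.val = 0 then ⟨1 % n, Nat.mod_lt _ (Nat.lt_of_le_of_lt (Nat.zero_le _) i.isLt)⟩
  else if i.val = 1 then ⟨0, Nat.lt_of_le_of_lt (Nat.zero_le _) i.isLt⟩
  else i

/-- The singular map sending n−1 to 0 and fixing everything else. -/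
def sing (n : ℕ) (i : Fin n) : Fin n :=
  if i.val = n - 1 then ⟨0, Nat.lt_of_le_of_lt (Nat.zero_le _) i.isLt⟩ else i

/-- The transposition (n−2, n−1). -/
def tpTop (n : ℕ) (i : Fin n) : Fin n :=
  if i.val = n - 1 then ⟨n - 2, by have := i.isLt; omega⟩
  else if i.val = n - 2 then ⟨n - 1, by have := i.isLt; omega⟩
  else i

/-- The singular map sending n−1 to n−2 and fixing everything else. -/
def singTop (n : ℕ) (i : Fin n) : Fin n :=
  if i.val = n - 1 then ⟨n - 2, by have := i.isLt; omega⟩ else i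

/-- 𝒰ₙ(a,b,∅): binary alphabet, a = cycle (0,…,n−1), b = transposition (0,1),
initial state 0, final state n−1. -/
def U2dfa (n : ℕ) (h : 0 < n) : DFA (Fin 2) (Fin n) where
  step := fun i x => if x = 0 then cyc n i else tp01 n i
  start := ⟨0, h⟩
  accept := {i | i.val = n - 1}

def U2 (n : ℕ) (h : 0 < n) : Language (Fin 2) := (U2dfa n h).accepts

/-- 𝒰ₙ(a,b,c): a = cycle, b = transposition (0,1), c = (n−1 ↦ 0). -/
def Udfa (n : ℕ) (h : 0 < n) : DFA (Fin 3) (Fin n) where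
  step := fun i x => if x = 0 then cyc n i else if x = 1 then tp01 n i else sing n i
  start := ⟨0, h⟩
  accept := {i | i.val = n - 1}

def U (n : ℕ) (h : 0 < n) : Language (Fin 3) := (Udfa n h).accepts

/-- 𝒰ₙ(a,b,c) with final state set {0}. -/
def U0dfa (n : ℕ) (h : 0 < n) : DFA (Fin 3) (Fin n) where
  step := fun i x => if x = 0 then cyc n i else if x = 1 then tp01 n i else sing n i
  start := ⟨0, h⟩
  accept := {i | i.val = 0}

def U0 (n : ℕ) (h : 0 < n) : Language (Fin 3) := (U0dfa n h).accepts

/-- 𝒰ₙ(a,b,c,d): a = cycle, b = transposition (0,1), c = (n−1 ↦ 0), d = identity. -/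
def U4dfa (n : ℕ) (h : 0 < n) : DFA (Fin 4) (Fin n) where
  step := fun i x =>
    if x = 0 then cyc n i else if x = 1 then tp01 n i else if x = 2 then sing n i else i
  start := ⟨0, h⟩
  accept := {i | i.val = n - 1}

def U4 (n : ℕ) (h : 0 < n) : Language (Fin 4) := (U4dfa n h).accepts

/-- 𝒰ₙ(d,c,b,a): d = cycle, c = transposition (0,1), b = (n−1 ↦ 0), a = identity. -/
def U4dcbaDfa (n : ℕ) (h : 0 < n) : DFA (Fin 4) (Fin n) where
  step := fun i x =>
    if x = 3 then cyc n i else if x = 2 then tp01 n i else if x = 1 then sing n i else i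
  start := ⟨0, h⟩
  accept := {i | i.val = n - 1}

def U4dcba (n : ℕ) (h : 0 < n) : Language (Fin 4) := (U4dcbaDfa n h).accepts

/-- 𝒱ₙ(a,b,c,d): a = cycle, b = transposition (n−2,n−1), c = (n−1 ↦ n−2), d = identity. -/
def Vdfa (n : ℕ) (h : 0 < n) : DFA (Fin 4) (Fin n) where
  step := fun i x =>
    if x = 0 then cyc n i else if x = 1 then tpTop n i else if x = 2 then singTop n i else i
  start := ⟨0, h⟩
  accept := {i | i.val = n - 1}

def V (n : ℕ) (h : 0 < n) : Language (Fin 4) := (Vdfa n h).accepts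

/-- 𝒱ₙ(d,c,b,a): d = cycle, c = transposition (n−2,n−1), b = (n−1 ↦ n−2), a = identity. -/
def VdcbaDfa (n : ℕ) (h : 0 < n) : DFA (Fin 4) (Fin n) where
  step := fun i x =>
    if x = 3 then cyc n i else if x = 2 then tpTop n i else if x = 1 then singTop n i else i
  start := ⟨0, h⟩
  accept := {i | i.val = n - 1}

def Vdcba (n : ℕ) (h : 0 < n) : Language (Fin 4) := (VdcbaDfa n h).accepts

/-- Direct product of two DFAs with a chosen set of final states. -/
def prodDFA {α σ₁ σ₂ : Type} (M : DFA α σ₁) (N : DFA α σ₂) (acc : Set (σ₁ × σ₂)) :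
    DFA α (σ₁ × σ₂) where
  step := fun p x => (M.step p.1 x, N.step p.2 x)
  start := (M.start, N.start)
  accept := acc


/-- Chinese-remainder style pairing k ↦ (k mod m, k mod n). -/
def toPair (m n : ℕ) (hm : 0 < m) (hn : 0 < n) (k : Fin (m * n)) : Fin m × Fin n :=
  (⟨k.val % m, Nat.mod_lt _ hm⟩, ⟨k.val % n, Nat.mod_lt _ hn⟩)

/-- Componentwise successor on the product of two cyclic automata. -/
def prodSucc (m n : ℕ) (p : Fin m × Fin n) : Fin m × Fin n := (cyc m p.1, cyc n p.2)

/-- One-letter subset transition of the reversed NFA of 𝒰ₙ(a,b,c). -/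
def rstep (n : ℕ) (h : 0 < n) (S : Set (Fin n)) (x : Fin 3) : Set (Fin n) :=
  {q | (Udfa n h).step q x ∈ S}

/-- Action of a word on subsets in the reversed NFA of 𝒰ₙ(a,b,c). -/
def rword (n : ℕ) (h : 0 < n) (S : Set (Fin n)) (w : List (Fin 3)) : Set (Fin n) :=
  w.foldl (rstep n h) S

end SCPaper

open SCPaper

open SCPaper

/-! Intersect a DFA for the complement of `K` with the subset automaton of the reversal of a
DFA for `L`. Its `m` states with empty subset component are rejecting and closed under
transitions, so they can be merged into one, leaving `m * 2 ^ n - m + 1` states. -/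

namespace DFA

variable {α σ : Type*}

def IsRejectingTrap (M : DFA α σ) (D : Finset σ) : Prop :=
  ∀ s ∈ D, (∀ a, M.step s a ∈ D) ∧ s ∉ M.accept

section collapse

variable [DecidableEq σ]

def collapseState (D : Finset σ) (s : σ) : Option {s // s ∉ D} :=
  if h : s ∈ D then none else some ⟨s, h⟩

def collapse (M : DFA α σ) (D : Finset σ) : DFA α (Option {s // s ∉ D}) where
  step p a := p.bind fun s => collapseState D (M.step s a)
  start := collapseState D M.start
  accept := {p | p.elim False fun s => s.1 ∈ M.accept}

variable {D} {M : DFA α σ}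

theorem IsRejectingTrap.collapseState_step (hD : M.IsRejectingTrap D) (s : σ) (a : α) :
    collapseState D (M.step s a) = (M.collapse D).step (collapseState D s) a := by
  by_cases hs : s ∈ D
  · simp [collapseState, collapse, hs, (hD s hs).1 a]
  · simp [collapseState, collapse, hs]

theorem IsRejectingTrap.collapseState_evalFrom (hD : M.IsRejectingTrap D) (s : σ) (w : List α) :
    collapseState D (M.evalFrom s w) = (M.collapse D).evalFrom (collapseState D s) w := by
  induction w generalizing s with
  | nil => rfl
  | cons a w ih => simp only [evalFrom_cons, ih, hD.collapseState_step]

theorem IsRejectingTrap.mem_accept_iff (hD : M.IsRejectingTrap D) (s : σ) :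
    collapseState D s ∈ (M.collapse D).accept ↔ s ∈ M.accept := by
  by_cases hs : s ∈ D
  · simp [collapseState, collapse, hs, (hD s hs).2]
  · simp [collapseState, collapse, hs]

theorem IsRejectingTrap.accepts_collapse (hD : M.IsRejectingTrap D) :
    (M.collapse D).accepts = M.accepts := by
  ext w
  rw [mem_accepts, mem_accepts, eval, eval, ← hD.mem_accept_iff, hD.collapseState_evalFrom]
  rfl

end collapse

end DFA

namespace SCPaper

theorem sc_accepts_le_card {α σ : Type} [Fintype σ] (M : DFA α σ) :
    sc M.accepts ≤ Fintype.card σ :=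
  Nat.sInf_le ⟨DFA.reindex (Fintype.equivFin σ) M, DFA.accepts_reindex _ _⟩

theorem sc_accepts_le_of_isRejectingTrap {α σ : Type} [Fintype σ] [DecidableEq σ]
    {M : DFA α σ} {D : Finset σ} (hD : M.IsRejectingTrap D) :
    sc M.accepts ≤ Fintype.card σ - D.card + 1 := by
  have := sc_accepts_le_card (M.collapse D)
  rwa [hD.accepts_collapse, Fintype.card_option, Fintype.card_subtype_compl,
    Fintype.card_coe] at this

section reverseDiff

open DFA

variable {α σ τ : Type} (M : DFA α σ) (N : DFA α τ)

theorem accepts_reverse_inter_compl :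
    (N.toNFA.reverse.toDFA.inter Mᶜ).accepts = ldiff (rev N.accepts) M.accepts := by
  rw [accepts_inter, accepts_compl, NFA.toDFA_correct]
  congr 1
  ext w
  rw [NFA.mem_accepts_reverse, DFA.toNFA_correct]
  rfl

theorem isRejectingTrap_reverse_inter [Fintype σ] (M' : DFA α σ) :
    (N.toNFA.reverse.toDFA.inter M').IsRejectingTrap ({∅} ×ˢ Finset.univ) := by
  intro p hp
  obtain ⟨hS, -⟩ := Finset.mem_product.mp hp
  rw [Finset.mem_singleton] at hS
  refine ⟨fun a => ?_, fun ⟨⟨s, hs, _⟩, _⟩ => ?_⟩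
  · simp [hS, NFA.toDFA, NFA.stepSet_empty]
  · rw [hS] at hs
    exact hs

theorem sc_ldiff_rev_le [Fintype σ] [Fintype τ] [Nonempty σ] :
    sc (ldiff (rev N.accepts) M.accepts)
      ≤ Fintype.card σ * 2 ^ Fintype.card τ - (Fintype.card σ - 1) := by
  classical
  have h := sc_accepts_le_of_isRejectingTrap (isRejectingTrap_reverse_inter N Mᶜ)
  rw [accepts_reverse_inter_compl, Fintype.card_prod, Fintype.card_set, Finset.card_product,
    Finset.card_singleton, Finset.card_univ, one_mul] at h
  have hσ : 0 < Fintype.card σ := Fintype.card_pos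
  have : Fintype.card σ ≤ 2 ^ Fintype.card τ * Fintype.card σ :=
    Nat.le_mul_of_pos_left _ (Nat.two_pow_pos _)
  rw [mul_comm]
  omega

end reverseDiff

end SCPaper

theorem reversed_diff_left_upper_bound {α : Type} (K L : Language α) (m n : ℕ)
    (hK : Regular K) (hL : Regular L) (hm : sc K = m) (hn : sc L = n) :
    sc (ldiff (rev L) K) ≤ m * 2 ^ n - (m - 1) := by
  obtain ⟨M, rfl⟩ : m ∈ complexitySet K := hm ▸ Nat.sInf_mem hK
  obtain ⟨N, rfl⟩ : n ∈ complexitySet L := hn ▸ Nat.sInf_mem hL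
  have : Nonempty (Fin m) := ⟨M.start⟩
  simpa only [Fintype.card_fin] using sc_ldiff_rev_le M N
end

section
/- Let m, n ≥ 3 with m ≠ n. Then the state complexity of Uₘ(a,b,∅) ⊕ Uₙ(a,b,∅) (symmetric difference) is exactly mn. -/
open SCPaper

open SCPaper

/-!
The letter `a` rotates both components of a product state, `(x, y) ↦ (x + 1, y + 1)`, and `b`
swaps `0` and `1` in each component. If `n ∤ m`, rotate `(x, y)` to `(0, y')` with `y' ∉ {0, 1}`
(three consecutive multiples of `m` suffice to find one), apply `b` and rotate back: this reaches
`(x + 1, y)`, so with rotations every state is reachable; if `m ∤ n` swap the roles, and one of the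
two holds since `m ≠ n`. If `(x, y)` and `(x', y')` are not separated by any word `aᵗ`, then
among `t < mn` those for which exactly one of `x + t`, `x' + t` is final are exactly those for
which exactly one of `y + t`, `y' + t` is final. The first set has `2n` or `0` elements according
as `x ≠ x'` or not, the second `2m` or `0`, so `m ≠ n` forces `x = x'` and `y = y'`.
-/

open Finset Fin.NatCast Fin.CommRing

namespace SCPaper

section Automata

variable {α σ τ : Type}

theorem card_le_card_of_accepts_eq [Fintype σ] [Fintype τ] {M : DFA α σ} {N : DFA α τ}
    (hreach : Function.Surjective M.eval) (hdist : Function.Injective M.acceptsFrom)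
    (h : N.accepts = M.accepts) : Fintype.card σ ≤ Fintype.card τ := by
  choose w hw using hreach
  have hquot : ∀ p, M.acceptsFrom p = N.acceptsFrom (N.eval (w p)) := fun p => by
    rw [← Language.leftQuotient_accepts_apply, h, Language.leftQuotient_accepts_apply, hw]
  refine Fintype.card_le_of_injective (fun p => N.eval (w p)) fun p q hpq => hdist ?_
  rw [hquot p, hquot q]
  exact congrArg N.acceptsFrom hpq

theorem sc_accepts_eq_card [Fintype σ] (M : DFA α σ) (hreach : Function.Surjective M.eval)
    (hdist : Function.Injective M.acceptsFrom) : sc M.accepts = Fintype.card σ := by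
  have hmem : Fintype.card σ ∈ complexitySet M.accepts :=
    ⟨DFA.reindex (Fintype.equivFin σ) M, DFA.accepts_reindex _ _⟩
  refine le_antisymm (Nat.sInf_le hmem) (le_csInf ⟨_, hmem⟩ ?_)
  rintro k ⟨N, hN⟩
  simpa using card_le_card_of_accepts_eq hreach hdist hN

def symmDiffDFA (M : DFA α σ) (N : DFA α τ) : DFA α (σ × τ) :=
  prodDFA M N {p | Xor (p.1 ∈ M.accept) (p.2 ∈ N.accept)}

theorem symmDiffDFA_evalFrom (M : DFA α σ) (N : DFA α τ) (p : σ × τ) (w : List α) :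
    (symmDiffDFA M N).evalFrom p w = (M.evalFrom p.1 w, N.evalFrom p.2 w) := by
  induction w generalizing p with
  | nil => rfl
  | cons a w ih => exact ih _

theorem symmDiffDFA_eval (M : DFA α σ) (N : DFA α τ) (w : List α) :
    (symmDiffDFA M N).eval w = (M.eval w, N.eval w) :=
  symmDiffDFA_evalFrom M N _ w

theorem accepts_symmDiffDFA (M : DFA α σ) (N : DFA α τ) :
    (symmDiffDFA M N).accepts = lsymm M.accepts N.accepts := by
  ext w
  rw [DFA.mem_accepts, symmDiffDFA_eval]
  rfl

theorem evalFrom_mem_range_eval (M : DFA α σ) {p : σ} (hp : p ∈ Set.range M.eval)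
    (w : List α) : M.evalFrom p w ∈ Set.range M.eval := by
  obtain ⟨v, rfl⟩ := hp
  exact ⟨v ++ w, DFA.evalFrom_of_append _ _ _ _⟩

end Automata

section Residues

variable {m n : ℕ}

theorem exists_two_le_val_add_mul [NeZero n] (hn : 3 ≤ n) (c d : Fin n) (hd : d ≠ 0) :
    ∃ s : ℕ, 2 ≤ (c + s * d).val := by
  have hmod : ∀ a e : ℕ, a < n → e < n →
      (a + e < n ∧ (a + e) % n = a + e) ∨ (n ≤ a + e ∧ (a + e) % n = a + e - n) := by
    intro a e ha he
    rcases Nat.lt_or_ge (a + e) n with h | h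
    · exact Or.inl ⟨h, Nat.mod_eq_of_lt h⟩
    · exact Or.inr ⟨h, by rw [Nat.mod_eq_sub_mod h, Nat.mod_eq_of_lt (by omega)]⟩
  by_contra! h
  have h0 := h 0
  have h1 := h 1
  have h2 := h 2
  have hd0 : d.val ≠ 0 := fun h => hd (Fin.ext h)
  simp only [Nat.cast_zero, zero_mul, add_zero, Nat.cast_one, one_mul, Nat.cast_ofNat, two_mul,
    ← add_assoc, Fin.val_add] at h0 h1 h2
  have hcd := hmod c d c.isLt d.isLt
  have hcdd := hmod ((c.val + d.val) % n) d (Nat.mod_lt _ (Nat.pos_of_neZero n)) d.isLt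
  omega

theorem card_filter_natCast_eq [NeZero m] (N : ℕ) (c : Fin m) :
    #{t ∈ range (m * N) | ((t : ℕ) : Fin m) = c} = N := by
  have hcount := Nat.count_modEq_card (m * N) (Nat.pos_of_neZero m) c.val
  rw [Nat.count_eq_card_filter_range, Nat.mul_mod_right, Nat.mul_div_cancel_left _
    (Nat.pos_of_neZero m), if_neg (Nat.not_lt_zero _), add_zero] at hcount
  refine (congrArg card ?_).trans hcount
  ext t
  rw [mem_filter, mem_filter, Fin.ext_iff, Fin.val_natCast, Nat.ModEq, Nat.mod_eq_of_lt c.isLt]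

theorem card_filter_xor_add_natCast_eq [NeZero m] (N : ℕ) (x x' c : Fin m) :
    #{t ∈ range (m * N) | Xor (x + (t : ℕ) = c) (x' + (t : ℕ) = c)} =
      if x = x' then 0 else 2 * N := by
  split_ifs with hxx
  · simp [hxx]
  have hiff : ∀ t : ℕ, Xor (x + t = c) (x' + t = c) ↔ (t : Fin m) = c - x ∨ (t : Fin m) = c - x' :=
    fun t => by
      rw [xor_iff_or_and_not_and, eq_sub_iff_add_eq', eq_sub_iff_add_eq']
      exact and_iff_left fun h => hxx (add_right_cancel (h.1.trans h.2.symm))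
  have hdisj : Disjoint {t ∈ range (m * N) | ((t : ℕ) : Fin m) = c - x}
      {t ∈ range (m * N) | ((t : ℕ) : Fin m) = c - x'} :=
    disjoint_filter.2 fun t _ h h' => hxx (sub_right_inj.1 (h.symm.trans h'))
  rw [filter_congr fun t _ => hiff t, filter_or, card_union_of_disjoint hdisj,
    card_filter_natCast_eq, card_filter_natCast_eq, two_mul]

theorem eq_of_forall_xor_iff [NeZero m] [NeZero n] (hmn : m ≠ n) {x x' c : Fin m}
    {y y' d : Fin n} (h : ∀ t : ℕ, Xor (x + t = c) (y + t = d) ↔ Xor (x' + t = c) (y' + t = d)) :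
    x = x' ∧ y = y' := by
  have hsplit : ∀ t : ℕ, Xor (x + t = c) (x' + t = c) ↔ Xor (y + t = d) (y' + t = d) := by
    intro t
    have := h t
    unfold Xor at *
    tauto
  have hcard := congrArg card (filter_congr (s := range (m * n)) fun t _ => hsplit t)
  rw [card_filter_xor_add_natCast_eq, Nat.mul_comm m n, card_filter_xor_add_natCast_eq] at hcard
  split_ifs at hcard with hx hy hy
  · exact ⟨hx, hy⟩
  all_goals omega

end Residues

section U2

variable {m n : ℕ}

theorem cyc_eq_add_one [NeZero n] (i : Fin n) : cyc n i = i + 1 := by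
  ext
  rw [Fin.val_add, Fin.val_one', Nat.add_mod_mod]
  rfl

theorem tp01_zero [NeZero n] : tp01 n 0 = 1 := by
  ext
  simp [tp01]

theorem tp01_of_two_le {i : Fin n} (h : 2 ≤ i.val) : tp01 n i = i := by
  rw [tp01, if_neg (by omega), if_neg (by omega)]

theorem U2dfa_evalFrom_replicate_zero [NeZero n] (i : Fin n) (t : ℕ) :
    (U2dfa n n.pos_of_neZero).evalFrom i (List.replicate t 0) = i + t := by
  induction t generalizing i with
  | zero => simp
  | succ t ih =>
    rw [List.replicate_succ, DFA.evalFrom_cons, ih]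
    show cyc n i + t = i + ↑(t + 1)
    rw [cyc_eq_add_one]
    push_cast
    ring

variable (m n) [NeZero m] [NeZero n]

abbrev U2symmDiffDFA : DFA (Fin 2) (Fin m × Fin n) :=
  symmDiffDFA (U2dfa m m.pos_of_neZero) (U2dfa n n.pos_of_neZero)

namespace U2symmDiffDFA

variable {m n}

theorem add_natCast_mem_range_eval (t : ℕ) {x : Fin m} {y : Fin n}
    (h : (x, y) ∈ Set.range (U2symmDiffDFA m n).eval) :
    (x + t, y + t) ∈ Set.range (U2symmDiffDFA m n).eval := by
  simpa only [symmDiffDFA_evalFrom, U2dfa_evalFrom_replicate_zero] using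
    evalFrom_mem_range_eval _ h (List.replicate t 0)

theorem sub_natCast_mem_range_eval (t : ℕ) {x : Fin m} {y : Fin n}
    (h : (x, y) ∈ Set.range (U2symmDiffDFA m n).eval) :
    (x - t, y - t) ∈ Set.range (U2symmDiffDFA m n).eval := by
  have hmn : 1 ≤ m * n := Nat.mul_pos m.pos_of_neZero n.pos_of_neZero
  simpa [Nat.cast_sub hmn, sub_eq_add_neg] using add_natCast_mem_range_eval ((m * n - 1) * t) h

theorem tp01_mem_range_eval {x : Fin m} {y : Fin n}
    (h : (x, y) ∈ Set.range (U2symmDiffDFA m n).eval) :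
    (tp01 m x, tp01 n y) ∈ Set.range (U2symmDiffDFA m n).eval :=
  evalFrom_mem_range_eval _ h [1]

theorem swap_mem_range_eval {x : Fin m} {y : Fin n}
    (h : (x, y) ∈ Set.range (U2symmDiffDFA m n).eval) :
    (y, x) ∈ Set.range (U2symmDiffDFA n m).eval := by
  obtain ⟨w, hw⟩ := h
  refine ⟨w, ?_⟩
  simp only [symmDiffDFA_eval, Prod.mk.injEq] at hw ⊢
  exact hw.symm

theorem add_one_fst_mem_range_eval (hn : 3 ≤ n) (hnm : ¬ n ∣ m) {x : Fin m} {y : Fin n}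
    (h : (x, y) ∈ Set.range (U2symmDiffDFA m n).eval) :
    (x + 1, y) ∈ Set.range (U2symmDiffDFA m n).eval := by
  obtain ⟨s, hs⟩ := exists_two_le_val_add_mul hn (y + (-x).val) m (by simpa using hnm)
  set t := (-x).val + s * m
  have hx : x + t = 0 := by simp [t]
  have hy : y + t = y + (-x).val + s * m := by push_cast [t]; ring
  have h₁ := tp01_mem_range_eval (add_natCast_mem_range_eval t h)
  rw [hx, tp01_zero, tp01_of_two_le (hy ▸ hs)] at h₁
  convert sub_natCast_mem_range_eval t h₁ using 2
  · linear_combination hx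
  · ring

theorem eval_surjective_of_not_dvd (hn : 3 ≤ n) (hnm : ¬ n ∣ m) :
    Function.Surjective (U2symmDiffDFA m n).eval := by
  have hfst : ∀ k : ℕ, ((k : Fin m), (0 : Fin n)) ∈ Set.range (U2symmDiffDFA m n).eval := by
    intro k
    induction k with
    | zero => exact ⟨[], rfl⟩
    | succ k ih => simpa using add_one_fst_mem_range_eval hn hnm ih
  rintro ⟨x, y⟩
  simpa using add_natCast_mem_range_eval y.val (hfst (x - y.val).val)

theorem eval_surjective (hm : 3 ≤ m) (hn : 3 ≤ n) (hmn : m ≠ n) :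
    Function.Surjective (U2symmDiffDFA m n).eval := by
  by_cases hnm : n ∣ m
  · have hmn' : ¬ m ∣ n := fun h => hmn (Nat.dvd_antisymm h hnm)
    rintro ⟨x, y⟩
    exact swap_mem_range_eval (eval_surjective_of_not_dvd hm hmn' (y, x))
  · exact eval_surjective_of_not_dvd hn hnm

theorem acceptsFrom_injective (hmn : m ≠ n) :
    Function.Injective (U2symmDiffDFA m n).acceptsFrom := by
  rintro ⟨x, y⟩ ⟨x', y'⟩ h
  have hrot := fun t : ℕ => congrArg (List.replicate t 0 ∈ ·) h
  simp only [DFA.mem_acceptsFrom, symmDiffDFA_evalFrom, U2dfa_evalFrom_replicate_zero,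
    eq_iff_iff] at hrot
  obtain ⟨rfl, rfl⟩ := eq_of_forall_xor_iff hmn (c := ⟨m - 1, Nat.sub_one_lt (NeZero.ne m)⟩)
    (d := ⟨n - 1, Nat.sub_one_lt (NeZero.ne n)⟩) (by simp only [Fin.ext_iff]; exact hrot)
  rfl

end U2symmDiffDFA

end U2

end SCPaper

theorem symmdiff_same_stream_tight (m n : ℕ) (hm : 3 ≤ m) (hn : 3 ≤ n) (hmn : m ≠ n) :
    sc (lsymm (U2 m (by omega)) (U2 n (by omega))) = m * n := by
  have : NeZero m := ⟨by omega⟩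
  have : NeZero n := ⟨by omega⟩
  have h := sc_accepts_eq_card (U2symmDiffDFA m n) (U2symmDiffDFA.eval_surjective hm hn hmn)
    (U2symmDiffDFA.acceptsFrom_injective hmn)
  rwa [accepts_symmDiffDFA, Fintype.card_prod, Fintype.card_fin, Fintype.card_fin] at h
end
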